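/- arXiv:2601.01472 — 3 statements merged into one kernel-verified Lean document; each statement's English description precedes it below -/
import Mathlib

section
/- In a convex biproduct category C, for all arrows f, g : X → Y and all p ∈ [0,1], f +_p g = ⟨f,g⟩_{p,1-p} ; [id_Y, id_Y], where ⟨f,g⟩_{p,1-p} : X → Y ⊕ Y is the convex pairing of f and g with weights p, 1-p, and [id_Y, id_Y] : Y ⊕ Y → Y is the copairing of the identities. -/
open CategoryTheory

universe v u

/-- A pointed convex algebra (pca): a set with a distinguished point `star` and
binary convex-combination operations `add p` for `p ∈ (0,1)`, extended to `[0,1]`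
by `add 1 x y = x` and `add 0 x y = y`. -/
structure PCAStruct (X : Type u) : Type u where
  star : X
  add : ℝ → X → X → X
  add_one : ∀ x y, add 1 x y = x
  add_zero : ∀ x y, add 0 x y = y
  add_assoc' : ∀ p q : ℝ, 0 < p → p < 1 → 0 < q → q < 1 → ∀ x y z,
    add p (add q x y) z = add (p * q) x (add (p * (1 - q) / (1 - p * q)) y z)
  add_comm' : ∀ p : ℝ, 0 < p → p < 1 → ∀ x y, add p x y = add (1 - p) y x
  add_idem : ∀ p : ℝ, 0 < p → p < 1 → ∀ x, add p x x = x

namespace PCAStruct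

variable {X : Type u}

/-- Multiplication by a scalar: `p · x := x +_p ⋆`. -/
def smul (s : PCAStruct X) (p : ℝ) (x : X) : X := s.add p x s.star

/-- The `n`-ary convex sum `Σᵢ pᵢ · xᵢ` of a pca, defined inductively. -/
noncomputable def csum (s : PCAStruct X) : (n : ℕ) → (Fin n → ℝ) → (Fin n → X) → X
  | 0, _, _ => s.star
  | n + 1, p, x =>
      s.add (p 0) (x 0)
        (s.csum n (fun i => if p 0 = 1 then 0 else p i.succ / (1 - p 0)) (fun i => x i.succ))

end PCAStruct

/-- A PCA-enrichment of a category: every homset carries a pca structure,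
compatibly with composition. -/
structure PCAEnrichment (C : Type u) [Category.{v} C] : Type (max u v) where
  pca : ∀ X Y : C, PCAStruct (X ⟶ Y)
  comp_add : ∀ {X Y Z : C} (e : X ⟶ Y) (p : ℝ), 0 < p → p < 1 → ∀ (f g : Y ⟶ Z),
    e ≫ (pca Y Z).add p f g = (pca X Z).add p (e ≫ f) (e ≫ g)
  add_comp : ∀ {X Y Z : C} (p : ℝ), 0 < p → p < 1 → ∀ (f g : X ⟶ Y) (h : Y ⟶ Z),
    (pca X Y).add p f g ≫ h = (pca X Z).add p (f ≫ h) (g ≫ h)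
  comp_star : ∀ {X Y Z : C} (f : X ⟶ Y), f ≫ (pca Y Z).star = (pca X Z).star
  star_comp : ∀ {X Y Z : C} (f : Y ⟶ Z), (pca X Y).star ≫ f = (pca X Z).star

/-- A convex biproduct category: a PCA-enriched category with a zero object and,
for every pair of objects, an object `X₁ ⊕ X₂` which is simultaneously a coproduct
and a convex product, with `ιᵢ ; πⱼ = δᵢⱼ`. -/
structure ConvexBiproduct (C : Type u) [Category.{v} C] extends PCAEnrichment C where
  zero : C
  fromZero : ∀ X : C, zero ⟶ X
  fromZero_unique : ∀ {X : C} (f : zero ⟶ X), f = fromZero X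
  toZero : ∀ X : C, X ⟶ zero
  toZero_unique : ∀ {X : C} (f : X ⟶ zero), f = toZero X
  sum : C → C → C
  inl : ∀ X Y : C, X ⟶ sum X Y
  inr : ∀ X Y : C, Y ⟶ sum X Y
  fst : ∀ X Y : C, sum X Y ⟶ X
  snd : ∀ X Y : C, sum X Y ⟶ Y
  copair_exists : ∀ {X Y Z : C} (f : X ⟶ Z) (g : Y ⟶ Z),
    ∃! h : sum X Y ⟶ Z, inl X Y ≫ h = f ∧ inr X Y ≫ h = g
  pair_exists : ∀ {A X Y : C} (p q : ℝ), 0 ≤ p → 0 ≤ q → p + q ≤ 1 →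
    ∀ (f : A ⟶ X) (g : A ⟶ Y),
      ∃! h : A ⟶ sum X Y,
        h ≫ fst X Y = (pca A X).smul p f ∧ h ≫ snd X Y = (pca A Y).smul q g
  inl_fst : ∀ X Y : C, inl X Y ≫ fst X Y = 𝟙 X
  inl_snd : ∀ X Y : C, inl X Y ≫ snd X Y = (pca X Y).star
  inr_fst : ∀ X Y : C, inr X Y ≫ fst X Y = (pca Y X).star
  inr_snd : ∀ X Y : C, inr X Y ≫ snd X Y = 𝟙 Y

namespace ConvexBiproduct

variable {C : Type u} [Category.{v} C] (B : ConvexBiproduct C)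

/-- The copairing `[f,g]` induced by the coproduct. -/
noncomputable def copair {X Y Z : C} (f : X ⟶ Z) (g : Y ⟶ Z) : B.sum X Y ⟶ Z :=
  (B.copair_exists f g).choose

/-- The convex pairing `⟨f,g⟩_{p,q}` induced by the convex product. -/
noncomputable def pair {A X Y : C} (p q : ℝ) (f : A ⟶ X) (g : A ⟶ Y) : A ⟶ B.sum X Y :=
  if h : 0 ≤ p ∧ 0 ≤ q ∧ p + q ≤ 1 then
    (B.pair_exists p q h.1 h.2.1 h.2.2 f g).choose
  else f ≫ B.inl X Y

/-- The monoidal product of morphisms, `f ⊕ g`. -/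
noncomputable def hsum {X X' Y Y' : C} (f : X ⟶ X') (g : Y ⟶ Y') :
    B.sum X Y ⟶ B.sum X' Y' :=
  B.copair (f ≫ B.inl X' Y') (g ≫ B.inr X' Y')

/-- The symmetry `σ_{X,Y}`. -/
noncomputable def swap (X Y : C) : B.sum X Y ⟶ B.sum Y X :=
  B.copair (B.inr Y X) (B.inl Y X)

/-- Left unitor `λ_X : 0 ⊕ X ⟶ X`. -/
noncomputable def lunit (X : C) : B.sum B.zero X ⟶ X :=
  B.copair (B.fromZero X) (𝟙 X)

/-- Right unitor `ρ_X : X ⊕ 0 ⟶ X`. -/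
noncomputable def runit (X : C) : B.sum X B.zero ⟶ X :=
  B.copair (𝟙 X) (B.fromZero X)

/-- Associator `(X ⊕ Y) ⊕ Z ⟶ X ⊕ (Y ⊕ Z)`. -/
noncomputable def assocHom (X Y Z : C) : B.sum (B.sum X Y) Z ⟶ B.sum X (B.sum Y Z) :=
  B.copair
    (B.copair (B.inl X (B.sum Y Z)) (B.inl Y Z ≫ B.inr X (B.sum Y Z)))
    (B.inr Y Z ≫ B.inr X (B.sum Y Z))

/-- The codiagonal `∇_X = [id,id] : X ⊕ X ⟶ X`. -/
noncomputable def codiag (X : C) : B.sum X X ⟶ X := B.copair (𝟙 X) (𝟙 X)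

/-- The convex diagonal `◁_p = ⟨id,id⟩_{p,1-p} : X ⟶ X ⊕ X`. -/
noncomputable def diag (p : ℝ) (X : C) : X ⟶ B.sum X X :=
  B.pair p (1 - p) (𝟙 X) (𝟙 X)

/-- Scalar multiplication on homsets. -/
def smul {X Y : C} (p : ℝ) (f : X ⟶ Y) : X ⟶ Y := (B.pca X Y).smul p f

/-- Convex combination on homsets. -/
def add {X Y : C} (p : ℝ) (f g : X ⟶ Y) : X ⟶ Y := (B.pca X Y).add p f g

/-- The zero morphism. -/
def star (X Y : C) : X ⟶ Y := (B.pca X Y).star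

end ConvexBiproduct

/-- A functor between PCA-enriched categories is PCA-enriched if it preserves the
pca structure on every homset. -/
structure IsPCAFunctor {C : Type u} {D : Type v} [Category C] [Category D]
    (EC : PCAEnrichment C) (ED : PCAEnrichment D) (F : C ⥤ D) : Prop where
  map_add : ∀ {X Y : C} (p : ℝ), 0 < p → p < 1 → ∀ (f g : X ⟶ Y),
    F.map ((EC.pca X Y).add p f g) = (ED.pca (F.obj X) (F.obj Y)).add p (F.map f) (F.map g)
  map_star : ∀ {X Y : C},
    F.map ((EC.pca X Y).star) = (ED.pca (F.obj X) (F.obj Y)).star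

/-- A functor between convex biproduct categories preserves finite coproducts:
the image of the zero object is initial and the images of the designated
coproduct cocones are coproducts. -/
structure PreservesCBCoproducts {C : Type u} {D : Type v} [Category C] [Category D]
    (BC : ConvexBiproduct C) (BD : ConvexBiproduct D) (F : C ⥤ D) : Prop where
  zero_initial : ∀ Z : D, ∃! _h : F.obj BC.zero ⟶ Z, True
  sum_coprod : ∀ (X Y : C) {Z : D} (f : F.obj X ⟶ Z) (g : F.obj Y ⟶ Z),
    ∃! h : F.obj (BC.sum X Y) ⟶ Z,
      F.map (BC.inl X Y) ≫ h = f ∧ F.map (BC.inr X Y) ≫ h = g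

/-- A morphism of convex biproduct categories: a PCA-enriched functor preserving
finite coproducts. -/
def IsCBMorphism {C : Type u} {D : Type v} [Category C] [Category D]
    (BC : ConvexBiproduct C) (BD : ConvexBiproduct D) (F : C ⥤ D) : Prop :=
  IsPCAFunctor BC.toPCAEnrichment BD.toPCAEnrichment F ∧ PreservesCBCoproducts BC BD F


namespace ConvexBiproduct

variable {C : Type u} [Category.{v} C] (B : ConvexBiproduct C)

lemma inl_copair {X Y Z : C} (f : X ⟶ Z) (g : Y ⟶ Z) :
    B.inl X Y ≫ B.copair f g = f := (B.copair_exists f g).choose_spec.1.1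

lemma inr_copair {X Y Z : C} (f : X ⟶ Z) (g : Y ⟶ Z) :
    B.inr X Y ≫ B.copair f g = g := (B.copair_exists f g).choose_spec.1.2

lemma pair_unique {A X Y : C} {p q : ℝ} (hp : 0 ≤ p) (hq : 0 ≤ q) (hpq : p + q ≤ 1)
    (f : A ⟶ X) (g : A ⟶ Y) (h : A ⟶ B.sum X Y)
    (h1 : h ≫ B.fst X Y = (B.pca A X).smul p f)
    (h2 : h ≫ B.snd X Y = (B.pca A Y).smul q g) :
    B.pair p q f g = h := by
  rw [pair, dif_pos ⟨hp, hq, hpq⟩]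
  have u := (B.pair_exists p q hp hq hpq f g).choose_spec
  exact (u.2 h ⟨h1, h2⟩).symm

end ConvexBiproduct

/-- In a convex biproduct category `C`, for all arrows
`f, g : X ⟶ Y` and all `p ∈ [0,1]`,
`f +_p g = ⟨f,g⟩_{p,1-p} ; [id_Y, id_Y]`. -/
theorem add_eq_pair_comp_codiag {C : Type u} [Category.{v} C]
    (B : ConvexBiproduct C) {X Y : C} (f g : X ⟶ Y) (p : ℝ)
    (hp0 : 0 ≤ p) (hp1 : p ≤ 1) :
    B.add p f g = B.pair p (1 - p) f g ≫ B.codiag Y := by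
  rcases eq_or_lt_of_le hp0 with h0 | h0
  · -- p = 0
    have hp : p = 0 := h0.symm
    subst hp
    have hpair : B.pair 0 (1 - 0) f g = g ≫ B.inr Y Y := by
      apply B.pair_unique le_rfl (by norm_num) (by norm_num)
      · rw [Category.assoc, B.inr_fst, B.comp_star, PCAStruct.smul,
          (B.pca X Y).add_zero]
      · rw [Category.assoc, B.inr_snd, Category.comp_id, PCAStruct.smul]
        norm_num [(B.pca X Y).add_one]
    rw [hpair, ConvexBiproduct.add, (B.pca X Y).add_zero, ConvexBiproduct.codiag,
      Category.assoc, B.inr_copair, Category.comp_id]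
  rcases eq_or_lt_of_le hp1 with h1 | h1
  · -- p = 1
    subst h1
    have hpair : B.pair 1 (1 - 1) f g = f ≫ B.inl Y Y := by
      apply B.pair_unique (by norm_num) (by norm_num) (by norm_num)
      · rw [Category.assoc, B.inl_fst, Category.comp_id, PCAStruct.smul,
          (B.pca X Y).add_one]
      · rw [Category.assoc, B.inl_snd, B.comp_star, PCAStruct.smul]
        norm_num [(B.pca X Y).add_zero]
    rw [hpair, ConvexBiproduct.add, (B.pca X Y).add_one, ConvexBiproduct.codiag,
      Category.assoc, B.inl_copair, Category.comp_id]
  · -- 0 < p < 1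
    have hpair : B.pair p (1 - p) f g
        = (B.pca X (B.sum Y Y)).add p (f ≫ B.inl Y Y) (g ≫ B.inr Y Y) := by
      apply B.pair_unique (le_of_lt h0) (by linarith) (by linarith)
      · rw [B.add_comp p h0 h1, Category.assoc, Category.assoc, B.inl_fst,
          B.inr_fst, Category.comp_id, B.comp_star, PCAStruct.smul]
      · rw [B.add_comp p h0 h1, Category.assoc, Category.assoc, B.inl_snd,
          B.inr_snd, Category.comp_id, B.comp_star, PCAStruct.smul,
          (B.pca X Y).add_comm' p h0 h1]
    rw [hpair, B.add_comp p h0 h1, ConvexBiproduct.codiag, Category.assoc,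
      Category.assoc, B.inl_copair, B.inr_copair, Category.comp_id,
      Category.comp_id, ConvexBiproduct.add]
end

section
/- Every convex biproduct category has n-ary convex products for every n ∈ ℕ: for objects X₁, …, Xₙ, the iterated sum X₁ ⊕ ⋯ ⊕ Xₙ carries projections π_i such that for all p₁, …, pₙ ∈ [0,1] with Σᵢpᵢ ≤ 1 and all arrows f_i : A → X_i there exists a unique arrow h : A → X₁ ⊕ ⋯ ⊕ Xₙ with h;π_i = p_i·f_i for all i = 1, …, n (for n = 0 this says 0 is terminal). -/
open CategoryTheory

universe v u

namespace ConvexBiproduct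

variable {C : Type u} [Category.{v} C] (B : ConvexBiproduct C)

/-- The iterated sum `X₁ ⊕ (X₂ ⊕ (⋯ ⊕ 0))` of a finite family of objects. -/
def nSum : (n : ℕ) → (Fin n → C) → C
  | 0, _ => B.zero
  | n + 1, X => B.sum (X ⟨0, n.succ_pos⟩) (nSum n (fun i => X i.succ))

/-- The `i`-th projection out of the iterated sum. -/
noncomputable def nProj : (n : ℕ) → (X : Fin n → C) → (i : Fin n) → (B.nSum n X ⟶ X i)
  | 0, _, i => i.elim0
  | n + 1, X, ⟨0, _⟩ => B.fst _ _
  | n + 1, X, ⟨j + 1, hj⟩ =>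
      B.snd _ _ ≫ nProj n (fun i => X i.succ) ⟨j, Nat.lt_of_succ_lt_succ hj⟩

end ConvexBiproduct

section Aux

variable {C : Type u} [Category.{v} C]

theorem PCAStruct.smul_zero'' {X : Type u} (s : PCAStruct X) (x : X) :
    s.smul 0 x = s.star := s.add_zero x s.star

theorem PCAStruct.smul_one'' {X : Type u} (s : PCAStruct X) (x : X) :
    s.smul 1 x = x := s.add_one x s.star

theorem PCAStruct.smul_smul'' {X : Type u} (s : PCAStruct X) {a b : ℝ}
    (ha0 : 0 ≤ a) (ha1 : a ≤ 1) (hb0 : 0 ≤ b) (hb1 : b ≤ 1) (x : X) :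
    s.smul a (s.smul b x) = s.smul (a * b) x := by
  rcases eq_or_lt_of_le ha0 with h | ha0'
  · rw [← h, zero_mul, s.smul_zero'', s.smul_zero'']
  rcases eq_or_lt_of_le ha1 with h | ha1'
  · rw [h, one_mul, s.smul_one'']
  rcases eq_or_lt_of_le hb0 with h | hb0'
  · rw [← h, mul_zero, s.smul_zero'']
    exact s.add_idem a ha0' ha1' s.star
  rcases eq_or_lt_of_le hb1 with h | hb1'
  · rw [h, mul_one, s.smul_one'']
  unfold PCAStruct.smul
  rw [s.add_assoc' a b ha0' ha1' hb0' hb1']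
  congr 1
  exact s.add_idem _ (div_pos (by nlinarith) (by nlinarith)) (by
    rw [div_lt_one (by nlinarith)]; nlinarith) s.star

theorem PCAEnrichment.smul_comp' (E : PCAEnrichment C) {A X Y : C} {p : ℝ}
    (h0 : 0 ≤ p) (h1 : p ≤ 1) (f : A ⟶ X) (g : X ⟶ Y) :
    (E.pca A X).smul p f ≫ g = (E.pca A Y).smul p (f ≫ g) := by
  rcases eq_or_lt_of_le h0 with h | h0'
  · rw [← h, (E.pca A X).smul_zero'', (E.pca A Y).smul_zero'', E.star_comp]
  rcases eq_or_lt_of_le h1 with h | h1'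
  · rw [h, (E.pca A X).smul_one'', (E.pca A Y).smul_one'']
  unfold PCAStruct.smul
  rw [E.add_comp p h0' h1', E.star_comp]

theorem ConvexBiproduct.nProj_zero' (B : ConvexBiproduct C) (n : ℕ)
    (X : Fin (n + 1) → C) :
    B.nProj (n + 1) X 0 = B.fst (X 0) (B.nSum n fun j => X j.succ) := rfl

theorem ConvexBiproduct.nProj_succ' (B : ConvexBiproduct C) (n : ℕ)
    (X : Fin (n + 1) → C) (i : Fin n) :
    B.nProj (n + 1) X i.succ =
      (B.snd (X 0) (B.nSum n fun j => X j.succ) : B.nSum (n + 1) X ⟶ _) ≫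
        B.nProj n (fun j => X j.succ) i := by
  rcases i with ⟨j, hj⟩; rfl

theorem ConvexBiproduct.smul_def' (B : ConvexBiproduct C) {X Y : C} (p : ℝ)
    (f : X ⟶ Y) : B.smul p f = (B.pca X Y).smul p f := rfl

end Aux
/-- **Statement 2.** Every convex biproduct category has `n`-ary convex products:
for objects `X₁, …, Xₙ` and weights `p₁, …, pₙ ∈ [0,1]` with `Σᵢ pᵢ ≤ 1`, and
arrows `fᵢ : A ⟶ Xᵢ`, there is a unique `h : A ⟶ X₁ ⊕ ⋯ ⊕ Xₙ` with
`h ; πᵢ = pᵢ · fᵢ` for all `i` (for `n = 0` this says that `0` is terminal). -/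
theorem nary_convex_products {C : Type u} [Category.{v} C] (B : ConvexBiproduct C)
    (n : ℕ) (X : Fin n → C) (p : Fin n → ℝ)
    (hp : ∀ i, 0 ≤ p i) (hsum : ∑ i, p i ≤ 1)
    (A : C) (f : (i : Fin n) → (A ⟶ X i)) :
    ∃! h : A ⟶ B.nSum n X, ∀ i : Fin n, h ≫ B.nProj n X i = B.smul (p i) (f i) := by
  induction n with
  | zero =>
    refine ⟨B.toZero A, fun i => i.elim0, fun g _ => ?_⟩
    rw [B.toZero_unique g]
  | succ n IH =>
    have hsum' : p 0 + ∑ i : Fin n, p i.succ ≤ 1 := by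
      rw [← Fin.sum_univ_succ]; exact hsum
    have htail0 : (0:ℝ) ≤ ∑ i : Fin n, p i.succ :=
      Finset.sum_nonneg fun i _ => hp _
    have hterm : ∀ j : Fin n, p j.succ ≤ ∑ i : Fin n, p i.succ := fun j =>
      Finset.single_le_sum (fun i _ => hp _) (Finset.mem_univ j)
    have hp0 : 0 ≤ p 0 := hp 0
    have hp1 : p 0 ≤ 1 := by linarith
    set r : Fin n → ℝ := fun i => if p 0 = 1 then 0 else p i.succ / (1 - p 0) with hr
    have htailz : p 0 = 1 → ∀ j : Fin n, p j.succ = 0 := by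
      intro h1 j
      have h2 := hterm j
      have h3 := hp j.succ
      linarith
    have hr0 : ∀ i, 0 ≤ r i := by
      intro i; rw [hr]; dsimp only
      split
      · exact le_refl 0
      · next hne =>
        have : p 0 < 1 := lt_of_le_of_ne hp1 hne
        exact div_nonneg (hp _) (by linarith)
    have hr1 : ∀ i, r i ≤ 1 := by
      intro i; rw [hr]; dsimp only
      split
      · exact zero_le_one
      · next hne =>
        have hlt : p 0 < 1 := lt_of_le_of_ne hp1 hne
        rw [div_le_one (by linarith)]
        have := hterm i; linarith
    have hrsum : ∑ i, r i ≤ 1 := by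
      rw [hr]; dsimp only
      split
      · simp
      · next hne =>
        have hlt : p 0 < 1 := lt_of_le_of_ne hp1 hne
        rw [← Finset.sum_div, div_le_one (by linarith)]
        linarith
    have hmul : ∀ i, (1 - p 0) * r i = p i.succ := by
      intro i; rw [hr]; dsimp only
      split
      · next h1 => rw [htailz h1 i, mul_zero]
      · next hne =>
        have hlt : p 0 < 1 := lt_of_le_of_ne hp1 hne
        rw [mul_comm]
        exact div_mul_cancel₀ _ (sub_ne_zero.mpr fun hh => hne hh.symm)
    have hq0 : 0 ≤ 1 - p 0 := by linarith
    have hq1 : 1 - p 0 ≤ 1 := by linarith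
    obtain ⟨k, hk, hkuniq⟩ :=
      IH (fun i => X i.succ) r hr0 hrsum (fun i => f i.succ)
    obtain ⟨h, ⟨hfst, hsnd⟩, huniq⟩ :=
      B.pair_exists (p 0) (1 - p 0) hp0 hq0 (by linarith) (f 0) k
    have hproj : ∀ i : Fin (n + 1),
        h ≫ B.nProj (n + 1) X i = B.smul (p i) (f i) := by
      intro i
      refine Fin.cases ?_ ?_ i
      · rw [B.nProj_zero', B.smul_def']
        exact hfst
      · intro j
        rw [B.nProj_succ', ← Category.assoc, hsnd, B.smul_def',
          B.toPCAEnrichment.smul_comp' hq0 hq1, hk j, B.smul_def',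
          (B.pca A (X j.succ)).smul_smul'' hq0 hq1 (hr0 j) (hr1 j), hmul j]
    obtain ⟨k₂, hk₂, hk₂uniq⟩ :=
      IH (fun i => X i.succ) (fun i => p i.succ) (fun i => hp _)
        (by linarith) (fun i => f i.succ)
    have hsndk₂ : ∀ g : A ⟶ B.nSum (n + 1) X,
        (∀ i : Fin (n + 1), g ≫ B.nProj (n + 1) X i = B.smul (p i) (f i)) →
        (g ≫ B.snd (X 0) (B.nSum n fun j => X j.succ) : A ⟶ _) = k₂ := by
      intro g hg
      refine hk₂uniq _ (fun j => ?_)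
      have hgj := hg j.succ
      rw [B.nProj_succ'] at hgj
      exact (Category.assoc _ _ _).trans hgj
    refine ⟨h, hproj, fun g hg => ?_⟩
    refine huniq g ⟨?_, ?_⟩
    · rw [← B.nProj_zero' n X]
      exact hg 0
    · exact (hsndk₂ g hg).trans ((hsndk₂ h hproj).symm.trans hsnd)
end

section
/- Let A, X₁, X₂ be sets, let f : A → X₁ and g : A → X₂ be arrows of Kl(D≤) (i.e., functions assigning to each a ∈ A finitely supported subprobability distributions f(−|a) on X₁ and g(−|a) on X₂), and let p₁, p₂ ∈ [0,1] with p₁ + p₂ ≤ 1. Define arrows π₁ : X₁ ⊕ X₂ → X₁ and π₂ : X₁ ⊕ X₂ → X₂ of Kl(D≤) by π₁(x₁|z) = 1 if z = ι₁(x₁) and 0 otherwise, and π₂(x₂|z) = 1 if z = ι₂(x₂) and 0 otherwise, where X₁ ⊕ X₂ is the disjoint union with injections ι₁, ι₂. Then there exists a unique arrow h : A → X₁ ⊕ X₂ of Kl(D≤) such that h;π₁ = p₁·f and h;π₂ = p₂·g, where (p·f)(y|a) := p·f(y|a); explicitly, h(ι₁(x₁)|a) = p₁·f(x₁|a) and h(ι₂(x₂)|a)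 = p₂·g(x₂|a). Hence X₁ ⊕ X₂ with π₁, π₂ is a convex product of X₁ and X₂ in Kl(D≤). -/
open Finsupp

universe u

/-- An arrow `A ⟶ X` of the Kleisli category `Kl(D≤)` of the finitely supported
subdistribution monad: a function assigning to each `a ∈ A` a finitely
supported subprobability distribution on `X`. -/
def IsKlArrow {A X : Type u} (f : A → (X →₀ ℝ)) : Prop :=
  ∀ a, (∀ x, 0 ≤ f a x) ∧ (f a).sum (fun _ p => p) ≤ 1

/-- Kleisli composition: `(f;g)(z|a) = Σ_y f(y|a) · g(z|y)`. -/
noncomputable def klComp {A X Y : Type u} (f : A → (X →₀ ℝ)) (g : X → (Y →₀ ℝ)) :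
    A → (Y →₀ ℝ) :=
  fun a => (f a).sum (fun x p => p • g x)

/-- The projection `π₁ : X₁ ⊕ X₂ → X₁` of `Kl(D≤)`:
`π₁(x₁|z) = 1` if `z = ι₁(x₁)` and `0` otherwise. -/
noncomputable def klFst (X₁ X₂ : Type u) : (X₁ ⊕ X₂) → (X₁ →₀ ℝ) :=
  Sum.elim (fun x => Finsupp.single x 1) (fun _ => 0)

/-- The projection `π₂ : X₁ ⊕ X₂ → X₂` of `Kl(D≤)`. -/
noncomputable def klSnd (X₁ X₂ : Type u) : (X₁ ⊕ X₂) → (X₂ →₀ ℝ) :=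
  Sum.elim (fun _ => 0) (fun x => Finsupp.single x 1)

lemma klComp_fst_apply {A X₁ X₂ : Type u} (h : A → ((X₁ ⊕ X₂) →₀ ℝ)) (a : A) (x : X₁) :
    klComp h (klFst X₁ X₂) a x = h a (Sum.inl x) := by
  classical
  unfold klComp
  rw [Finsupp.sum_apply]
  have e : ∀ z (p : ℝ), (p • klFst X₁ X₂ z) x = if z = Sum.inl x then p else 0 := by
    intro z p
    cases z with
    | inl y =>
      rcases eq_or_ne y x with hyx | hyx
      · simp [klFst, Finsupp.single_apply, hyx]
      · simp [klFst, Finsupp.single_apply, hyx, hyx.symm]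
    | inr y => simp [klFst]
  simp only [e]
  rw [Finsupp.sum_ite_eq']
  split <;> simp_all [Finsupp.notMem_support_iff]

lemma klComp_snd_apply {A X₁ X₂ : Type u} (h : A → ((X₁ ⊕ X₂) →₀ ℝ)) (a : A) (x : X₂) :
    klComp h (klSnd X₁ X₂) a x = h a (Sum.inr x) := by
  classical
  unfold klComp
  rw [Finsupp.sum_apply]
  have e : ∀ z (p : ℝ), (p • klSnd X₁ X₂ z) x = if z = Sum.inr x then p else 0 := by
    intro z p
    cases z with
    | inr y =>
      rcases eq_or_ne y x with hyx | hyx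
      · simp [klSnd, Finsupp.single_apply, hyx]
      · simp [klSnd, Finsupp.single_apply, hyx, hyx.symm]
    | inl y => simp [klSnd]
  simp only [e]
  rw [Finsupp.sum_ite_eq']
  split <;> simp_all [Finsupp.notMem_support_iff]

/-- **Statement 16.** For Kleisli arrows `f : A ⟶ X₁`, `g : A ⟶ X₂` of `Kl(D≤)`
and `p₁, p₂ ∈ [0,1]` with `p₁ + p₂ ≤ 1`, there is a unique Kleisli arrow
`h : A ⟶ X₁ ⊕ X₂` with `h;π₁ = p₁·f` and `h;π₂ = p₂·g`; explicitly,
`h(ι₁(x₁)|a) = p₁·f(x₁|a)` and `h(ι₂(x₂)|a) = p₂·g(x₂|a)`. Hence `X₁ ⊕ X₂`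
with `π₁, π₂` is a convex product of `X₁` and `X₂` in `Kl(D≤)`. -/
theorem klD_convex_product {A X₁ X₂ : Type u}
    (f : A → (X₁ →₀ ℝ)) (g : A → (X₂ →₀ ℝ))
    (hf : IsKlArrow f) (hg : IsKlArrow g)
    (p₁ p₂ : ℝ) (hp₁ : 0 ≤ p₁) (hp₂ : 0 ≤ p₂) (hp : p₁ + p₂ ≤ 1) :
    (∃! h : A → ((X₁ ⊕ X₂) →₀ ℝ),
        IsKlArrow h ∧
        klComp h (klFst X₁ X₂) = (fun a => p₁ • f a) ∧
        klComp h (klSnd X₁ X₂) = (fun a => p₂ • g a)) ∧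
    (∀ h : A → ((X₁ ⊕ X₂) →₀ ℝ),
        (IsKlArrow h ∧
         klComp h (klFst X₁ X₂) = (fun a => p₁ • f a) ∧
         klComp h (klSnd X₁ X₂) = (fun a => p₂ • g a)) →
        (∀ a x₁, h a (Sum.inl x₁) = p₁ * f a x₁) ∧
        (∀ a x₂, h a (Sum.inr x₂) = p₂ * g a x₂)) := by
  classical
  -- the canonical candidate
  set h₀ : A → ((X₁ ⊕ X₂) →₀ ℝ) := fun a =>
    Finsupp.mapDomain Sum.inl (p₁ • f a) + Finsupp.mapDomain Sum.inr (p₂ • g a)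
    with hh₀
  have h₀inl : ∀ a x, h₀ a (Sum.inl x) = p₁ * f a x := by
    intro a x
    simp only [hh₀, Finsupp.add_apply]
    rw [Finsupp.mapDomain_apply Sum.inl_injective,
      Finsupp.mapDomain_notin_range _ _ (by simp)]
    simp
  have h₀inr : ∀ a x, h₀ a (Sum.inr x) = p₂ * g a x := by
    intro a x
    simp only [hh₀, Finsupp.add_apply]
    rw [Finsupp.mapDomain_apply Sum.inr_injective,
      Finsupp.mapDomain_notin_range _ _ (by simp)]
    simp
  have h₀arrow : IsKlArrow h₀ := by
    intro a
    constructor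
    · intro z
      cases z with
      | inl x => rw [h₀inl]; exact mul_nonneg hp₁ ((hf a).1 x)
      | inr x => rw [h₀inr]; exact mul_nonneg hp₂ ((hg a).1 x)
    · have e1 : (Finsupp.mapDomain Sum.inl (p₁ • f a) : (X₁ ⊕ X₂) →₀ ℝ).sum
          (fun _ p => p) = p₁ * (f a).sum (fun _ p => p) := by
        rw [Finsupp.sum_mapDomain_index (fun _ => rfl) (fun _ _ _ => rfl),
          Finsupp.sum_smul_index (fun _ => rfl), ← Finsupp.mul_sum]
      have e2 : (Finsupp.mapDomain Sum.inr (p₂ • g a) : (X₁ ⊕ X₂) →₀ ℝ).sum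
          (fun _ p => p) = p₂ * (g a).sum (fun _ p => p) := by
        rw [Finsupp.sum_mapDomain_index (fun _ => rfl) (fun _ _ _ => rfl),
          Finsupp.sum_smul_index (fun _ => rfl), ← Finsupp.mul_sum]
      have := Finsupp.sum_add_index' (f := Finsupp.mapDomain Sum.inl (p₁ • f a))
        (g := Finsupp.mapDomain Sum.inr (p₂ • g a)) (h := fun (_ : X₁ ⊕ X₂) (p : ℝ) => p)
        (fun _ => rfl) (fun _ _ _ => rfl)
      rw [hh₀]; dsimp only
      rw [this, e1, e2]
      have hsf : p₁ * (f a).sum (fun _ p => p) ≤ p₁ * 1 :=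
        mul_le_mul_of_nonneg_left (hf a).2 hp₁
      have hsg : p₂ * (g a).sum (fun _ p => p) ≤ p₂ * 1 :=
        mul_le_mul_of_nonneg_left (hg a).2 hp₂
      nlinarith
  -- any solution is pointwise determined
  have key : ∀ h : A → ((X₁ ⊕ X₂) →₀ ℝ),
      (IsKlArrow h ∧
       klComp h (klFst X₁ X₂) = (fun a => p₁ • f a) ∧
       klComp h (klSnd X₁ X₂) = (fun a => p₂ • g a)) →
      (∀ a x₁, h a (Sum.inl x₁) = p₁ * f a x₁) ∧
      (∀ a x₂, h a (Sum.inr x₂) = p₂ * g a x₂) := by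
    intro h ⟨_, h1, h2⟩
    constructor
    · intro a x
      rw [← klComp_fst_apply, h1]; simp
    · intro a x
      rw [← klComp_snd_apply, h2]; simp
  refine ⟨⟨h₀, ⟨h₀arrow, ?_, ?_⟩, ?_⟩, key⟩
  · funext a; ext x
    rw [klComp_fst_apply, h₀inl]; simp
  · funext a; ext x
    rw [klComp_snd_apply, h₀inr]; simp
  · intro h hh
    obtain ⟨k1, k2⟩ := key h hh
    funext a; ext z
    cases z with
    | inl x => rw [k1, h₀inl]
    | inr x => rw [k2, h₀inr]
end
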